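/- arXiv:math/0603080 — 2 statements merged into one kernel-verified Lean document; each statement's English description precedes it below -/
import Mathlib

section
/- For m = -1, if f solves f''' + f f'' + (f')² = 0 on [0,∞) with f(0) = -γ, f''(0) = -1 and f'(∞) = 0, then γ < 0 and f'(0) ≥ -1/γ. Moreover f satisfies the Riccati equation f'(t) + f(t)²/2 = ct + d with c = -1 - γ f'(0) and d = f'(0) + γ²/2. -/
/-! The equation is an exact derivative, `(f'' + f f')' = 0`, so `f'' + f f'` is the constant
`c = -1 - γ f'(0)` and one more integration gives the Riccati equation `f' + f²/2 = c t + d`.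
With the integrating factor `exp ∫ f` one gets `(exp (∫ f) f'')' = -exp (∫ f) f'² ≤ 0`, so
`f'' < 0`; hence `f'` decreases strictly to its limit `0` and stays positive. Therefore
`c t + d ≥ f' > 0` for all `t ≥ 0`, which forces `c ≥ 0`, i.e. `γ f'(0) ≤ -1`, and with
`f'(0) > 0` this gives `γ < 0` and `f'(0) ≥ -1/γ`. -/

open Set Filter Topology

theorem hasDerivAt_iteratedDeriv {f : ℝ → ℝ} {n : WithTop ℕ∞} {m : ℕ} (hf : ContDiff ℝ n f)
    (hm : m < n) (x : ℝ) : HasDerivAt (iteratedDeriv m f) (iteratedDeriv (m + 1) f x) x := by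
  rw [iteratedDeriv_succ]
  exact (hf.differentiable_iteratedDeriv m hm x).hasDerivAt

theorem eq_of_hasDerivAt_zero_on_Ici {g : ℝ → ℝ} {a : ℝ} (hg : ∀ x ≥ a, HasDerivAt g 0 x) :
    ∀ x ≥ a, g x = g a := fun b hb =>
  constant_of_has_deriv_right_zero
    (fun x hx => (hg x hx.1).continuousAt.continuousWithinAt)
    (fun x hx => (hg x hx.1).hasDerivWithinAt) b ⟨hb, le_rfl⟩

theorem neg_of_hasDerivAt_add_mul_nonpos {y y' p : ℝ → ℝ} {a : ℝ} (hp : Continuous p)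
    (hy : ∀ t, HasDerivAt y (y' t) t) (hle : ∀ t ≥ a, y' t + p t * y t ≤ 0) (ha : y a < 0) :
    ∀ t ≥ a, y t < 0 := by
  set P : ℝ → ℝ := fun t => ∫ s in a..t, p s
  have hP : ∀ t, HasDerivAt P (p t) t := fun t =>
    (hp.integral_hasStrictDerivAt a t).hasDerivAt
  have hE : ∀ t, HasDerivAt (fun t => Real.exp (P t) * y t)
      (Real.exp (P t) * (y' t + p t * y t)) t := fun t =>
    ((hP t).exp.mul (hy t)).congr_deriv (by ring)
  have hanti : AntitoneOn (fun t => Real.exp (P t) * y t) (Ici a) := by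
    refine antitoneOn_of_hasDerivWithinAt_nonpos (convex_Ici a)
      (fun t _ => (hE t).continuousAt.continuousWithinAt) (fun t _ => (hE t).hasDerivWithinAt)
      fun t ht => ?_
    rw [interior_Ici] at ht
    exact mul_nonpos_of_nonneg_of_nonpos (Real.exp_pos _).le (hle t ht.le)
  intro t ht
  have hEt : Real.exp (P t) * y t ≤ y a := by
    simpa [P] using hanti self_mem_Ici ht ht
  by_contra! hyt
  nlinarith [Real.exp_pos (P t)]

theorem lt_of_strictAntiOn_Ici_of_tendsto {g : ℝ → ℝ} {a l : ℝ} (hg : StrictAntiOn g (Ici a))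
    (hlim : Tendsto g atTop (𝓝 l)) : ∀ t ≥ a, l < g t := by
  intro t ht
  have hle : l ≤ g (t + 1) := le_of_tendsto hlim <| by
    filter_upwards [eventually_ge_atTop (t + 1)] with s hs
    exact hg.antitoneOn (mem_Ici.2 (by linarith)) (mem_Ici.2 (by linarith)) hs
  exact hle.trans_lt (hg ht (mem_Ici.2 (by linarith)) (lt_add_one t))

theorem nonneg_of_forall_nonneg_mul_add {c d : ℝ} (h : ∀ t ≥ (0 : ℝ), 0 ≤ c * t + d) :
    0 ≤ c := by
  by_contra! hc
  have hct : c * ((|d| + 1) / -c) = -(|d| + 1) := by field_simp [hc.ne]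
  have hnonneg := h ((|d| + 1) / -c) (div_nonneg (by positivity) (by linarith))
  linarith [le_abs_self d]

section ODE

variable {f f₁ f₂ f₃ : ℝ → ℝ}

theorem first_integral_of_ode (hf : ∀ t, HasDerivAt f (f₁ t) t)
    (hf₁ : ∀ t, HasDerivAt f₁ (f₂ t) t) (hf₂ : ∀ t, HasDerivAt f₂ (f₃ t) t)
    (hode : ∀ t ≥ (0 : ℝ), f₃ t + f t * f₂ t + f₁ t ^ 2 = 0) :
    ∀ t ≥ (0 : ℝ), f₂ t + f t * f₁ t = f₂ 0 + f 0 * f₁ 0 :=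
  eq_of_hasDerivAt_zero_on_Ici fun t ht =>
    ((hf₂ t).add ((hf t).mul (hf₁ t))).congr_deriv (by linarith [hode t ht])

theorem riccati_of_ode (hf : ∀ t, HasDerivAt f (f₁ t) t)
    (hf₁ : ∀ t, HasDerivAt f₁ (f₂ t) t) (hf₂ : ∀ t, HasDerivAt f₂ (f₃ t) t)
    (hode : ∀ t ≥ (0 : ℝ), f₃ t + f t * f₂ t + f₁ t ^ 2 = 0) :
    ∀ t ≥ (0 : ℝ),
      f₁ t + f t ^ 2 / 2 = (f₂ 0 + f 0 * f₁ 0) * t + (f₁ 0 + f 0 ^ 2 / 2) := by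
  set c := f₂ 0 + f 0 * f₁ 0
  have hconst := first_integral_of_ode hf hf₁ hf₂ hode
  have hG := eq_of_hasDerivAt_zero_on_Ici (g := fun t => f₁ t + f t ^ 2 / 2 - c * t) (a := 0)
    fun t ht => by
      refine (((hf₁ t).add (((hf t).pow 2).div_const 2)).sub
        ((hasDerivAt_id t).const_mul c)).congr_deriv ?_
      simp only [Nat.cast_ofNat, mul_one]
      linarith [hconst t ht]
  intro t ht
  linarith [hG t ht]

theorem second_deriv_neg_of_ode (hf : ∀ t, HasDerivAt f (f₁ t) t)
    (hf₂ : ∀ t, HasDerivAt f₂ (f₃ t) t)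
    (hode : ∀ t ≥ (0 : ℝ), f₃ t + f t * f₂ t + f₁ t ^ 2 = 0) (h₂ : f₂ 0 < 0) :
    ∀ t ≥ (0 : ℝ), f₂ t < 0 :=
  neg_of_hasDerivAt_add_mul_nonpos (continuous_iff_continuousAt.2 fun t => (hf t).continuousAt)
    hf₂ (fun t ht => by nlinarith [hode t ht, sq_nonneg (f₁ t)]) h₂

theorem deriv_pos_of_ode (hf : ∀ t, HasDerivAt f (f₁ t) t)
    (hf₁ : ∀ t, HasDerivAt f₁ (f₂ t) t) (hf₂ : ∀ t, HasDerivAt f₂ (f₃ t) t)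
    (hode : ∀ t ≥ (0 : ℝ), f₃ t + f t * f₂ t + f₁ t ^ 2 = 0) (h₂ : f₂ 0 < 0)
    (hlim : Tendsto f₁ atTop (𝓝 0)) :
    ∀ t ≥ (0 : ℝ), 0 < f₁ t := by
  refine lt_of_strictAntiOn_Ici_of_tendsto ?_ hlim
  refine strictAntiOn_of_hasDerivWithinAt_neg (convex_Ici 0)
    (fun t _ => (hf₁ t).continuousAt.continuousWithinAt) (fun t _ => (hf₁ t).hasDerivWithinAt)
    fun t ht => ?_
  rw [interior_Ici] at ht
  exact second_deriv_neg_of_ode hf hf₂ hode h₂ t ht.le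

end ODE

theorem stmt_13 (γ : ℝ)
    (f : ℝ → ℝ) (hf : ContDiff ℝ 3 f)
    (hode : ∀ t ≥ (0:ℝ), iteratedDeriv 3 f t + f t * iteratedDeriv 2 f t
      + (deriv f t) ^ 2 = 0)
    (h0 : f 0 = -γ) (h2 : iteratedDeriv 2 f 0 = -1)
    (hlim : Filter.Tendsto (deriv f) Filter.atTop (nhds 0)) :
    γ < 0 ∧ deriv f 0 ≥ -1 / γ ∧
      ∀ t ≥ (0:ℝ), deriv f t + (f t) ^ 2 / 2
        = (-1 - γ * deriv f 0) * t + (deriv f 0 + γ ^ 2 / 2) := by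
  have hf₀ : ∀ t, HasDerivAt f (deriv f t) t := fun t =>
    (hf.differentiable (by norm_num) t).hasDerivAt
  have hf₁ : ∀ t, HasDerivAt (deriv f) (iteratedDeriv 2 f t) t := by
    simpa only [iteratedDeriv_one] using hasDerivAt_iteratedDeriv (m := 1) hf (by norm_num)
  have hf₂ : ∀ t, HasDerivAt (iteratedDeriv 2 f) (iteratedDeriv 3 f t) t :=
    hasDerivAt_iteratedDeriv hf (by norm_num)
  have hric : ∀ t ≥ (0 : ℝ), deriv f t + f t ^ 2 / 2
      = (-1 - γ * deriv f 0) * t + (deriv f 0 + γ ^ 2 / 2) := fun t ht => by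
    rw [riccati_of_ode hf₀ hf₁ hf₂ hode t ht, h0, h2]; ring
  have hpos := deriv_pos_of_ode hf₀ hf₁ hf₂ hode (by rw [h2]; norm_num) hlim
  have hc : 0 ≤ -1 - γ * deriv f 0 :=
    nonneg_of_forall_nonneg_mul_add (d := deriv f 0 + γ ^ 2 / 2) fun t ht => by
      nlinarith [hric t ht, hpos t ht, sq_nonneg (f t)]
  have hγ : γ < 0 := by nlinarith [hpos 0 le_rfl]
  refine ⟨hγ, ?_, hric⟩
  rw [ge_iff_le, div_le_iff_of_neg hγ]
  linarith
end

section
/- Let m > -1 and let g be a solution of g''' + (m+2) g g'' - (2m+1)(g')² = 0 on [0,∞) with g(0) = 0, g''(0) = -1, g'(∞) = 0, such that 0 < g'(t) ≤ g'(0) and g(t) ≥ 0 for all t. Then g'(0) ≥ 1/(6(m+1))^{1/3}. -/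
/-! Along the solution, `(g'' + (m+2) g g')' = 3(m+1) g'² ≤ 3(m+1) α²` with `α = g'(0)`, and
`g g' ≥ 0`, so `g''(t) ≤ -1 + 3(m+1) α² t`. Integrating once more,
`0 < g'(t) ≤ α - t + (3(m+1)/2) α² t²`, and at the minimum `t = 1/(3(m+1)α²)` of this quadratic
the inequality reads `6(m+1) α³ > 1`. -/

theorem le_of_hasDerivAt_le_of_forall_ge {f f' B B' : ℝ → ℝ} {a x : ℝ}
    (hf : ∀ y ≥ a, HasDerivAt f (f' y) y) (hB : ∀ y ≥ a, HasDerivAt B (B' y) y)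
    (ha : f a ≤ B a) (bound : ∀ y ≥ a, f' y ≤ B' y) (hx : a ≤ x) : f x ≤ B x :=
  image_le_of_deriv_right_le_deriv_boundary
    (fun y hy => (hf y hy.1).continuousAt.continuousWithinAt)
    (fun y hy => (hf y hy.1).hasDerivWithinAt) ha
    (fun y hy => (hB y hy.1).continuousAt.continuousWithinAt)
    (fun y hy => (hB y hy.1).hasDerivWithinAt) (fun y hy => bound y hy.1) ⟨hx, le_rfl⟩

theorem ContDiff.hasDerivAt_iteratedDeriv {𝕜 F : Type*} [NontriviallyNormedField 𝕜]
    [NormedAddCommGroup F] [NormedSpace 𝕜 F] {f : 𝕜 → F} {n : ℕ} {k : ℕ}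
    (hf : ContDiff 𝕜 n f) (hk : k < n) (x : 𝕜) :
    HasDerivAt (iteratedDeriv k f) (iteratedDeriv (k + 1) f x) x := by
  rw [iteratedDeriv_succ]
  exact (hf.differentiable_iteratedDeriv k (mod_cast hk) x).hasDerivAt

theorem deriv_le_of_iteratedDeriv_two_le {g : ℝ → ℝ} {K t : ℝ} (hg : ContDiff ℝ 2 g)
    (hg'' : ∀ s ≥ 0, iteratedDeriv 2 g s ≤ -1 + K * s) (ht : 0 ≤ t) :
    deriv g t ≤ deriv g 0 - t + K / 2 * t ^ 2 := by
  have hquad (s : ℝ) : HasDerivAt (fun s => deriv g 0 - s + K / 2 * s ^ 2) (-1 + K * s) s := by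
    refine (((hasDerivAt_id s).const_sub (deriv g 0)).add
      ((hasDerivAt_pow 2 s).const_mul (K / 2))).congr_deriv ?_
    push_cast; ring
  refine le_of_hasDerivAt_le_of_forall_ge (fun s _ => ?_) (fun s _ => hquad s) (by simp) hg'' ht
  simpa only [iteratedDeriv_one] using hg.hasDerivAt_iteratedDeriv (k := 1) (by norm_num) s

section FalknerSkan

variable {m : ℝ} {g : ℝ → ℝ}

theorem hasDerivAt_iteratedDeriv_two_add (hg : ContDiff ℝ 3 g)
    (hode : ∀ t ≥ (0:ℝ), iteratedDeriv 3 g t + (m + 2) * g t * iteratedDeriv 2 g t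
      - (2 * m + 1) * (deriv g t) ^ 2 = 0) {t : ℝ} (ht : 0 ≤ t) :
    HasDerivAt (fun s => iteratedDeriv 2 g s + (m + 2) * g s * deriv g s)
      (3 * (m + 1) * deriv g t ^ 2) t := by
  have hg' : HasDerivAt g (deriv g t) t := (hg.differentiable (by norm_num) t).hasDerivAt
  have hg'' : HasDerivAt (deriv g) (iteratedDeriv 2 g t) t := by
    simpa only [iteratedDeriv_one] using hg.hasDerivAt_iteratedDeriv (k := 1) (by norm_num) t
  refine ((hg.hasDerivAt_iteratedDeriv (k := 2) (by norm_num) t).add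
    ((hg'.const_mul (m + 2)).mul hg'')).congr_deriv ?_
  linear_combination hode t ht

theorem iteratedDeriv_two_add_le (hg : ContDiff ℝ 3 g)
    (hode : ∀ t ≥ (0:ℝ), iteratedDeriv 3 g t + (m + 2) * g t * iteratedDeriv 2 g t
      - (2 * m + 1) * (deriv g t) ^ 2 = 0)
    (h0 : g 0 = 0) (h2 : iteratedDeriv 2 g 0 = -1) (hm : -1 ≤ m) {M t : ℝ}
    (hM : ∀ s ≥ 0, deriv g s ^ 2 ≤ M) (ht : 0 ≤ t) :
    iteratedDeriv 2 g t + (m + 2) * g t * deriv g t ≤ -1 + 3 * (m + 1) * M * t := by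
  have hline (s : ℝ) : HasDerivAt (fun s => -1 + 3 * (m + 1) * M * s) (3 * (m + 1) * M) s := by
    simpa using (hasDerivAt_id s).const_mul (3 * (m + 1) * M) |>.const_add (-1)
  refine le_of_hasDerivAt_le_of_forall_ge (fun s hs => hasDerivAt_iteratedDeriv_two_add hg hode hs)
    (fun s _ => hline s) (by simp [h0, h2]) (fun s hs => ?_) ht
  exact mul_le_mul_of_nonneg_left (hM s hs) (by linarith)

end FalknerSkan

theorem stmt_17_general (m : ℝ) (hm : m > -1)
    (g : ℝ → ℝ) (hg : ContDiff ℝ 3 g)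
    (hode : ∀ t ≥ (0:ℝ), iteratedDeriv 3 g t + (m + 2) * g t * iteratedDeriv 2 g t
      - (2 * m + 1) * (deriv g t) ^ 2 = 0)
    (h0 : g 0 = 0) (h2 : iteratedDeriv 2 g 0 = -1)
    (hincr : ∀ t ≥ (0:ℝ), 0 < deriv g t ∧ deriv g t ≤ deriv g 0)
    (hpos : ∀ t ≥ (0:ℝ), 0 ≤ g t) :
    deriv g 0 ≥ (1 / (6 * (m + 1))) ^ ((1:ℝ)/3) := by
  set α := deriv g 0
  have hα : 0 < α := (hincr 0 le_rfl).1
  have hm1 : 0 < m + 1 := by linarith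
  set K := 3 * (m + 1) * α ^ 2
  have hK : 0 < K := by positivity
  have hg'' (t : ℝ) (ht : 0 ≤ t) : iteratedDeriv 2 g t ≤ -1 + K * t := by
    have henergy := iteratedDeriv_two_add_le hg hode h0 h2 hm.le
      (fun s hs => pow_le_pow_left₀ (hincr s hs).1.le (hincr s hs).2 2) ht
    have : 0 ≤ (m + 2) * g t * deriv g t :=
      mul_nonneg (mul_nonneg (by linarith) (hpos t ht)) (hincr t ht).1.le
    linarith
  have hquad := deriv_le_of_iteratedDeriv_two_le (hg.of_le (by norm_num)) hg'' (t := 1 / K)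
    (by positivity)
  have hderiv_pos := (hincr (1 / K) (by positivity)).1
  have hcube : 1 / (6 * (m + 1)) ≤ α ^ 3 := by
    have : 1 < 2 * K * α := by
      field_simp at hquad
      nlinarith
    rw [div_le_iff₀ (by positivity)]
    linarith
  rw [ge_iff_le, one_div 3, Real.rpow_inv_le_iff_of_pos (by positivity) hα.le (by norm_num)]
  exact_mod_cast hcube

theorem stmt_17 (m : ℝ) (hm : m > -1)
    (g : ℝ → ℝ) (hg : ContDiff ℝ 3 g)
    (hode : ∀ t ≥ (0:ℝ), iteratedDeriv 3 g t + (m + 2) * g t * iteratedDeriv 2 g t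
      - (2 * m + 1) * (deriv g t) ^ 2 = 0)
    (h0 : g 0 = 0) (h2 : iteratedDeriv 2 g 0 = -1)
    (hlim : Filter.Tendsto (deriv g) Filter.atTop (nhds 0))
    (hincr : ∀ t ≥ (0:ℝ), 0 < deriv g t ∧ deriv g t ≤ deriv g 0)
    (hpos : ∀ t ≥ (0:ℝ), 0 ≤ g t) :
    deriv g 0 ≥ (1 / (6 * (m + 1))) ^ ((1:ℝ)/3) :=
  stmt_17_general m hm g hg hode h0 h2 hincr hpos
end
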